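/- Let 2 ≤ g₁ < g₂ < … < g_e be coprime positive integers forming a minimal generating system of the numerical semigroup S = ⟨g₁,…,g_e⟩, let F be its Frobenius number, n = |S ∩ [0, F]|, q = ⌈(F+1)/g₁⌉, and let t = |PF(S)| be the type of S, where PF(S) = {x ∈ ℤ ∖ S : x + s ∈ S for every s ∈ S ∖ {0}}. Then t ≤ (e − 2)·(n − q + 1) + 2. -/

import Mathlib

/-! Let `m = g₁` and let `Ap = {w ∈ S : w - m ∉ S}` be the Apéry set. Translating by `m` maps
`PF(S)` into the elements of `Ap` that are maximal for the steps `w ↦ w + gⱼ` (`j ≥ 2`). Every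
nonzero `w ∈ Ap` is such a step from some `v ∈ Ap`, so if `I` is the set of non-maximal
elements of `Ap`, then `|Ap| ≤ (e - 1)|I| + 1` and hence `t ≤ (e - 2)|I| + 1`. The elements of
`I` lie in `S ∩ [0, F]` and avoid the multiples `m, 2m, …, (q - 1)m ≤ F`, so `|I| ≤ n - q + 1`. -/

open Finset Pointwise

theorem Finset.card_le_card_mul_card_filter_exists_add_mem_add_one {α : Type*} [Add α] [Zero α]
    [DecidableEq α] {A B : Finset α} (hA : ∀ a ∈ A, a ≠ 0 → ∃ b ∈ A, ∃ t ∈ B, b + t = a) :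
    #A ≤ #B * #{a ∈ A | ∃ t ∈ B, a + t ∈ A} + 1 := by
  have hsub : A.erase 0 ⊆ {a ∈ A | ∃ t ∈ B, a + t ∈ A} + B := by
    intro a ha
    obtain ⟨b, hb, t, ht, rfl⟩ := hA a (mem_of_mem_erase ha) (ne_of_mem_erase ha)
    exact mem_add.2 ⟨b, mem_filter.2 ⟨hb, t, ht, mem_of_mem_erase ha⟩, t, ht, rfl⟩
  calc #A ≤ #(A.erase 0) + 1 := by have := pred_card_le_card_erase (s := A) (a := 0); omega
    _ ≤ #{a ∈ A | ∃ t ∈ B, a + t ∈ A} * #B + 1 := by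
      gcongr
      exact (card_le_card hsub).trans card_add_le
    _ = _ := by rw [mul_comm]

theorem Finset.card_filter_forall_add_notMem_le {α : Type*} [Add α] [Zero α]
    [DecidableEq α] {A B : Finset α} (hA : ∀ a ∈ A, a ≠ 0 → ∃ b ∈ A, ∃ t ∈ B, b + t = a) :
    (#{a ∈ A | ∀ t ∈ B, a + t ∉ A} : ℤ) ≤ (#B - 1) * #{a ∈ A | ∃ t ∈ B, a + t ∈ A} + 1 := by
  have hsplit : #{a ∈ A | ∀ t ∈ B, a + t ∉ A} + #{a ∈ A | ∃ t ∈ B, a + t ∈ A} = #A := by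
    simpa using card_filter_add_card_filter_not (s := A) fun a ↦ ∀ t ∈ B, a + t ∉ A
  have := card_le_card_mul_card_filter_exists_add_mem_add_one hA
  zify at hsplit this
  linarith

namespace AddSubmonoid

section Group

variable {G : Type*} [AddCommGroup G]

theorem exists_sub_mem_closure_of_ne_zero {T : Set G} {w : G} (hw : w ∈ closure T)
    (hw0 : w ≠ 0) : ∃ t ∈ T, w - t ∈ closure T := by
  induction hw using closure_induction with
  | mem t ht => exact ⟨t, ht, by simp⟩
  | zero => exact absurd rfl hw0
  | add x y _ hy ihx ihy =>
    by_cases hx0 : x = 0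
    · subst hx0
      simpa using ihy (by simpa using hw0)
    · obtain ⟨t, ht, hxt⟩ := ihx hx0
      exact ⟨t, ht, by simpa [sub_add_eq_add_sub] using add_mem hxt hy⟩

def aperySet (S : AddSubmonoid G) (m : G) : Set G :=
  {x | x ∈ S ∧ x - m ∉ S}

def pseudoFrobenius (S : AddSubmonoid G) : Set G :=
  {x | x ∉ S ∧ ∀ s ∈ S, s ≠ 0 → x + s ∈ S}

theorem exists_sub_mem_aperySet_closure {T : Set G} {m w : G}
    (hw : w ∈ (closure T).aperySet m) (hw0 : w ≠ 0) :
    ∃ t ∈ T, t ≠ m ∧ w - t ∈ (closure T).aperySet m := by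
  obtain ⟨t, ht, hwt⟩ := exists_sub_mem_closure_of_ne_zero hw.1 hw0
  refine ⟨t, ht, ?_, hwt, fun h ↦ hw.2 ?_⟩
  · rintro rfl
    exact hw.2 hwt
  · convert add_mem h (subset_closure ht) using 1
    abel

theorem ncard_pseudoFrobenius_le [DecidableEq G] {S : AddSubmonoid G} {m : G} (hm : m ∈ S)
    (hm0 : m ≠ 0) {A B : Finset G} (hA : (A : Set G) = S.aperySet m) (hBS : ∀ b ∈ B, b ∈ S)
    (hB0 : (0 : G) ∉ B) :
    S.pseudoFrobenius.ncard ≤ #{a ∈ A | ∀ b ∈ B, a + b ∉ A} := by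
  rw [← Set.ncard_coe_finset, ← Set.ncard_image_of_injective _ (add_left_injective m)]
  refine Set.ncard_le_ncard ?_ (Finset.finite_toSet _)
  rintro _ ⟨x, hx, rfl⟩
  simp only [coe_filter, ← Finset.mem_coe, hA, Set.mem_ofPred_eq]
  refine ⟨⟨hx.2 m hm hm0, by simpa using hx.1⟩, fun b hb hxb ↦ hxb.2 ?_⟩
  rw [add_right_comm, add_sub_cancel_right]
  exact hx.2 b (hBS b hb) (ne_of_mem_of_not_mem hb hB0)

end Group

theorem closure_nonneg {M : Type*} [AddCommMonoid M] [PartialOrder M] [IsOrderedAddMonoid M]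
    {T : Set M} (hT : ∀ t ∈ T, 0 ≤ t) {x : M} (hx : x ∈ closure T) : 0 ≤ x := by
  induction hx using closure_induction with
  | mem t ht => exact hT t ht
  | zero => exact le_rfl
  | add _ _ _ _ hx hy => exact add_nonneg hx hy

section Numerical

variable {S : AddSubmonoid ℤ} {m F : ℤ}

theorem le_of_mem_closure {T : Set ℤ} {x : ℤ} (hT : ∀ t ∈ T, m ≤ t) (hm : 0 ≤ m)
    (hx : x ∈ closure T) (hx0 : x ≠ 0) : m ≤ x := by
  obtain ⟨t, ht, hxt⟩ := exists_sub_mem_closure_of_ne_zero hx hx0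
  linarith [hT t ht, closure_nonneg (fun t ht ↦ hm.trans (hT t ht)) hxt]

theorem aperySet_subset_Icc (hS : ∀ s ∈ S, 0 ≤ s) (hF : ∀ x, x ∉ S → x ≤ F) :
    S.aperySet m ⊆ Set.Icc 0 (F + m) :=
  fun x hx ↦ ⟨hS x hx.1, by linarith [hF _ hx.2]⟩

/-- The multiples `m, 2m, …, km` lie in `S ∩ [0, F]` but not in `Ap(S, m)`. -/
theorem ncard_aperySet_inter_Icc_add_le (hm : m ∈ S) (hm0 : 0 < m) {k : ℕ}
    (hk : k * m ≤ F) :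
    (S.aperySet m ∩ Set.Icc 0 F).ncard + k ≤ ((S : Set ℤ) ∩ Set.Icc 0 F).ncard := by
  classical
  set M : Finset ℤ := (range k).image fun j : ℕ ↦ ((j + 1 : ℕ) : ℤ) * m
  have hMcard : (M : Set ℤ).ncard = k := by
    rw [Set.ncard_coe_finset, card_image_of_injective, card_range]
    intro i j hij
    simpa using mul_right_cancel₀ hm0.ne' hij
  have hMS : (M : Set ℤ) ⊆ (S : Set ℤ) ∩ Set.Icc 0 F := by
    simp only [M, coe_image, coe_range, Set.image_subset_iff]
    intro j hj
    refine ⟨by simpa [nsmul_eq_mul] using nsmul_mem hm (j + 1), by positivity, ?_⟩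
    have : ((j + 1 : ℕ) : ℤ) ≤ k := by simp only [Set.mem_Iio] at hj; omega
    exact (mul_le_mul_of_nonneg_right this hm0.le).trans hk
  have hdisj : Disjoint (S.aperySet m ∩ Set.Icc 0 F) (M : Set ℤ) := by
    simp only [M, coe_image, Set.disjoint_right, Set.mem_image]
    rintro _ ⟨j, -, rfl⟩ hj
    exact hj.1.2 (by simpa [nsmul_eq_mul, add_mul] using nsmul_mem hm j)
  have hfin : ((S : Set ℤ) ∩ Set.Icc 0 F).Finite := (Set.finite_Icc 0 F).inter_of_right _
  rw [← hMcard, ← Set.ncard_union_eq hdisj (hfin.subset (by gcongr; exact fun x hx ↦ hx.1))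
    (Finset.finite_toSet _)]
  exact Set.ncard_le_ncard (Set.union_subset (by gcongr; exact fun x hx ↦ hx.1) hMS) hfin

theorem card_filter_exists_add_mem_add_le {A B : Finset ℤ}
    (hS : ∀ s ∈ S, 0 ≤ s) (hF : ∀ x, x ∉ S → x ≤ F) (hA : (A : Set ℤ) = S.aperySet m)
    (hB : ∀ b ∈ B, m < b) (hm : m ∈ S) (hm0 : 0 < m) {k : ℕ} (hk : k * m ≤ F) :
    #{a ∈ A | ∃ b ∈ B, a + b ∈ A} + k ≤ ((S : Set ℤ) ∩ Set.Icc 0 F).ncard := by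
  refine le_trans ?_ (ncard_aperySet_inter_Icc_add_le hm hm0 hk)
  rw [← Set.ncard_coe_finset]
  refine Nat.add_le_add_right (Set.ncard_le_ncard (fun a ha ↦ ?_)
    ((Set.finite_Icc 0 F).inter_of_right _)) k
  simp only [coe_filter, ← Finset.mem_coe, hA, Set.mem_ofPred_eq] at ha
  obtain ⟨haAp, b, hb, habAp⟩ := ha
  have := hF _ habAp.2
  exact ⟨haAp, hS a haAp.1, by linarith [hB b hb]⟩

theorem ncard_pseudoFrobenius_closure_le {T : Finset ℤ} {k : ℕ} (hT : 2 ≤ #T) (hmT : m ∈ T)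
    (hm0 : 0 < m) (hTm : ∀ t ∈ T, m ≤ t) (hF : ∀ x, x ∉ closure (T : Set ℤ) → x ≤ F)
    (hk : k * m ≤ F) :
    ((closure (T : Set ℤ)).pseudoFrobenius.ncard : ℤ) ≤
      (#T - 2) * ((((closure (T : Set ℤ)) : Set ℤ) ∩ Set.Icc 0 F).ncard - k) + 1 := by
  classical
  set S := closure (T : Set ℤ)
  have hS : ∀ s ∈ S, 0 ≤ s := fun s ↦ closure_nonneg fun t ht ↦ hm0.le.trans (hTm t ht)
  have hm : m ∈ S := subset_closure hmT
  set B := T.erase m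
  have hB : ∀ b ∈ B, b ∈ S ∧ m < b := fun b hb ↦ ⟨subset_closure (mem_of_mem_erase hb),
    (hTm b (mem_of_mem_erase hb)).lt_of_ne' (ne_of_mem_erase hb)⟩
  obtain ⟨A, hA⟩ :=
    ((Set.finite_Icc 0 (F + m)).subset (aperySet_subset_Icc hS hF)).exists_finset_coe
  have hparent : ∀ a ∈ A, a ≠ 0 → ∃ b ∈ A, ∃ c ∈ B, b + c = a := by
    intro a ha ha0
    rw [← Finset.mem_coe, hA] at ha
    obtain ⟨c, hc, hcm, hac⟩ := exists_sub_mem_aperySet_closure ha ha0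
    exact ⟨a - c, by rwa [← Finset.mem_coe, hA], c, mem_erase.2 ⟨hcm, hc⟩, sub_add_cancel a c⟩
  have htype := ncard_pseudoFrobenius_le hm hm0.ne' hA (fun b hb ↦ (hB b hb).1)
    fun h ↦ (hB 0 h).2.not_gt hm0
  have hmax := card_filter_forall_add_notMem_le hparent
  have hint := card_filter_exists_add_mem_add_le hS hF hA (fun b hb ↦ (hB b hb).2) hm hm0 hk
  have hBT : (#B : ℤ) - 1 = #T - 2 := by
    have : #B + 1 = #T := card_erase_add_one hmT
    omega
  rw [hBT] at hmax
  zify at htype hint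
  nlinarith

end Numerical

end AddSubmonoid

theorem exists_ceil_add_one_div_eq_add_one_and_mul_le {F m : ℤ} (hF : 0 ≤ F) (hm : 0 < m) :
    ∃ k : ℕ, ⌈((F : ℚ) + 1) / m⌉ = k + 1 ∧ k * m ≤ F := by
  have hm' : (0 : ℚ) < m := by exact_mod_cast hm
  have hq : 1 ≤ ⌈((F : ℚ) + 1) / m⌉ := Int.one_le_ceil_iff.2 (by positivity)
  have h := Int.ceil_lt_add_one (((F : ℚ) + 1) / m)
  rw [← sub_lt_iff_lt_add, lt_div_iff₀ hm'] at h
  have : (⌈((F : ℚ) + 1) / m⌉ - 1) * m < F + 1 := by exact_mod_cast h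
  refine ⟨(⌈((F : ℚ) + 1) / m⌉ - 1).toNat, by omega, ?_⟩
  rw [Int.toNat_of_nonneg (by omega)]
  omega

/-- **Theorem 3 (bound on the type, sharp form).**
Let `2 ≤ g₁ < g₂ < … < g_e` be coprime positive integers forming a minimal generating
system of the numerical semigroup `S = ⟨g₁,…,g_e⟩`, let `F = max (ℤ \ S)` be the
Frobenius number, `n = |S ∩ [0, F]|`, `q = ⌈(F+1)/g₁⌉`, and let `t = |PF(S)|` be the
type of `S`, where `PF(S) = {x ∈ ℤ \ S : x + s ∈ S for every s ∈ S \ {0}}`.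
Then `t ≤ (e − 2)·(n − q + 1) + 2`. -/
theorem type_bound_q
    (e : ℕ) (he : 2 ≤ e) (g : Fin e → ℤ)
    (hg2 : 2 ≤ g ⟨0, by omega⟩)
    (hmono : StrictMono g)
    (S : Set ℤ)
    (hS : S = {x : ℤ | ∃ a : Fin e → ℕ, x = ∑ i, (a i : ℤ) * g i})
    (F : ℤ) (hFmax : ∀ x : ℤ, x ∉ S → x ≤ F)
    (n : ℕ) (hn : n = (S ∩ Set.Icc 0 F).ncard)
    (q : ℤ) (hq : q = ⌈((F : ℚ) + 1) / ((g ⟨0, by omega⟩ : ℤ) : ℚ)⌉)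
    (PF : Set ℤ) (hPF : PF = {x : ℤ | x ∉ S ∧ ∀ s ∈ S, s ≠ 0 → x + s ∈ S})
    (t : ℕ) (ht : t = PF.ncard) :
    (t : ℤ) ≤ ((e : ℤ) - 2) * ((n : ℤ) - q + 1) + 2 := by
  obtain rfl : S = AddSubmonoid.closure ((univ.image g : Finset ℤ) : Set ℤ) := by
    ext x
    simp [hS, AddSubmonoid.mem_closure_range_iff_of_fintype]
  subst hn hq hPF ht
  set m := g ⟨0, by omega⟩
  have hT : #(univ.image g) = e := by
    rw [card_image_of_injective _ hmono.injective, card_univ, Fintype.card_fin]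
  have hTm : ∀ t ∈ univ.image g, m ≤ t := by
    simp only [mem_image, mem_univ, true_and, forall_exists_index, forall_apply_eq_imp_iff]
    exact fun i ↦ hmono.monotone (Nat.zero_le (i : ℕ))
  have hF : 1 ≤ F := hFmax 1 fun h ↦ by
    linarith [AddSubmonoid.le_of_mem_closure hTm (by omega) h one_ne_zero]
  obtain ⟨k, hq, hk⟩ :=
    exists_ceil_add_one_div_eq_add_one_and_mul_le (by omega : 0 ≤ F) (by omega : 0 < m)
  have := AddSubmonoid.ncard_pseudoFrobenius_closure_le (hT.symm ▸ he)
    (mem_image_of_mem g (mem_univ _)) (by omega) hTm hFmax hk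
  rw [hT] at this
  rw [hq]
  exact this.trans (by linarith)
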